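/- Under the standing assumptions on the convex quadrilateral a, b, c, d and the interior point o, one has Δ(c,d,a)²·Δ(a,b,c)² ≤ 16·Δ(o,d,a)·Δ(o,c,d)·Δ(o,a,b)·Δ(o,b,c). -/

import Mathlib

/-- The standard 2×2 determinant on `ℝ × ℝ`. -/
noncomputable def det2 (x y : ℝ × ℝ) : ℝ := x.1 * y.2 - x.2 * y.1

/-- The area `Δ(p,q,r) = |det(q−p, r−p)|/2` of the triangle with vertices `p, q, r`. -/
noncomputable def tri (p q r : ℝ × ℝ) : ℝ := |det2 (q - p) (r - p)| / 2

/-!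
Write `T, U, P, Q` for twice the signed areas of `abc, cda, abd, bcd` and `x₁, x₂, x₃, x₄` for
those of `oab, obc, ocd, oda`. Since `o ↦ x₁` is affine, expanding it in barycentric coordinates
of `o` with respect to `bcd` gives `Q x₁ + (T - P) x₂ + T x₃ = T Q`; together with
`P + Q = T + U` this yields `4 x₁ x₃ - T U = (T - 2 x₁)(Q - 2 x₃) + (T - P)(T - 2 x₂)`, which is
nonnegative because `d` is non-admissible and `o` lies in the forbidden region. Expanding
`o ↦ x₂` with respect to `abd` gives `4 x₂ x₄ ≥ T U` in the same way, and the product of the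
two bounds is the claim.
-/

noncomputable def signedArea (p q r : ℝ × ℝ) : ℝ := det2 (q - p) (r - p)

lemma two_mul_tri (p q r : ℝ × ℝ) : 2 * tri p q r = |signedArea p q r| := by
  unfold tri signedArea; ring

lemma two_mul_tri_of_pos {p q r : ℝ × ℝ} (h : 0 < signedArea p q r) :
    2 * tri p q r = signedArea p q r := by
  rw [two_mul_tri, abs_of_pos h]

lemma signedArea_le_two_mul_tri (p q r : ℝ × ℝ) : signedArea p q r ≤ 2 * tri p q r :=
  (two_mul_tri p q r).symm ▸ le_abs_self _

lemma signedArea_mul_signedArea_le (p q r p' q' r' : ℝ × ℝ) :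
    signedArea p q r * signedArea p' q' r' ≤ 2 * tri p q r * (2 * tri p' q' r') := by
  rw [two_mul_tri, two_mul_tri, ← abs_mul]
  exact le_abs_self _

lemma tri_nonneg (p q r : ℝ × ℝ) : 0 ≤ tri p q r := by
  unfold tri; positivity

lemma signedArea_rotate (p q r : ℝ × ℝ) : signedArea p q r = signedArea q r p := by
  simp only [signedArea, det2, Prod.fst_sub, Prod.snd_sub]; ring

lemma signedArea_add_signedArea (a b c d : ℝ × ℝ) :
    signedArea a b c + signedArea c d a = signedArea a b d + signedArea b c d := by
  simp only [signedArea, det2, Prod.fst_sub, Prod.snd_sub]; ring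

lemma signedArea_barycentric_bcd (a b c d o : ℝ × ℝ) :
    signedArea b c d * signedArea o a b + (signedArea a b c - signedArea a b d) * signedArea o b c
      + signedArea a b c * signedArea o c d = signedArea a b c * signedArea b c d := by
  simp only [signedArea, det2, Prod.fst_sub, Prod.snd_sub]; ring

lemma signedArea_barycentric_abd (a b c d o : ℝ × ℝ) :
    signedArea a b d * signedArea o b c + (signedArea a b c - signedArea b c d) * signedArea o a b
      + signedArea a b c * signedArea o d a = signedArea a b c * signedArea a b d := by
  simp only [signedArea, det2, Prod.fst_sub, Prod.snd_sub]; ring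

lemma mul_le_four_mul_of_relation {T U P Q x₁ x₂ x₃ : ℝ} (hsum : T + U = P + Q) (hPT : P ≤ T)
    (h₁ : 2 * x₁ ≤ T) (h₂ : 2 * x₂ ≤ T) (h₃ : 2 * x₃ ≤ Q)
    (hrel : Q * x₁ + (T - P) * x₂ + T * x₃ = T * Q) : T * U ≤ 4 * (x₁ * x₃) := by
  linear_combination mul_nonneg (sub_nonneg.2 h₁) (sub_nonneg.2 h₃)
    + mul_nonneg (sub_nonneg.2 hPT) (sub_nonneg.2 h₂) - 2 * hrel + T * hsum

theorem stmt_6_general (a b c d o : ℝ × ℝ)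
    (hc1 : 0 < det2 (b - a) (c - a)) (hc2 : 0 < det2 (c - b) (d - b))
    (hc3 : 0 < det2 (d - c) (a - c)) (hc4 : 0 < det2 (a - d) (b - d))
    (hna1 : tri a b d ≤ tri a b c) (hna2 : tri b c d ≤ tri a b c)
    (hf1 : 2 * tri o a b ≤ tri a b c) (hf2 : 2 * tri o b c ≤ tri a b c)
    (hf3 : 2 * tri o d a ≤ tri a b d) (hf4 : 2 * tri o c d ≤ tri b c d) :
    tri c d a ^ 2 * tri a b c ^ 2 ≤ 16 * (tri o d a * tri o c d * tri o a b * tri o b c) := by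
  have hT : 2 * tri a b c = signedArea a b c := two_mul_tri_of_pos hc1
  have hQ : 2 * tri b c d = signedArea b c d := two_mul_tri_of_pos hc2
  have hU : 2 * tri c d a = signedArea c d a := two_mul_tri_of_pos hc3
  have hP : 2 * tri a b d = signedArea a b d :=
    two_mul_tri_of_pos (by rw [← signedArea_rotate]; exact hc4)
  have hsum := signedArea_add_signedArea a b c d
  have k₁ : tri c d a * tri a b c ≤ 4 * (tri o a b * tri o c d) := by
    have h := mul_le_four_mul_of_relation hsum
      (by linarith [signedArea_le_two_mul_tri a b d])
      (by linarith [signedArea_le_two_mul_tri o a b])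
      (by linarith [signedArea_le_two_mul_tri o b c])
      (by linarith [signedArea_le_two_mul_tri o c d])
      (signedArea_barycentric_bcd a b c d o)
    rw [← hT, ← hU] at h
    linarith [signedArea_mul_signedArea_le o a b o c d]
  have k₂ : tri c d a * tri a b c ≤ 4 * (tri o b c * tri o d a) := by
    have h := mul_le_four_mul_of_relation (hsum.trans (add_comm _ _))
      (by linarith [signedArea_le_two_mul_tri b c d])
      (by linarith [signedArea_le_two_mul_tri o b c])
      (by linarith [signedArea_le_two_mul_tri o a b])
      (by linarith [signedArea_le_two_mul_tri o d a])
      (signedArea_barycentric_abd a b c d o)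
    rw [← hT, ← hU] at h
    linarith [signedArea_mul_signedArea_le o b c o d a]
  calc tri c d a ^ 2 * tri a b c ^ 2 = (tri c d a * tri a b c) * (tri c d a * tri a b c) := by ring
    _ ≤ (4 * (tri o a b * tri o c d)) * (4 * (tri o b c * tri o d a)) :=
        mul_le_mul k₁ k₂ (mul_nonneg (tri_nonneg c d a) (tri_nonneg a b c))
          (mul_nonneg zero_le_four (mul_nonneg (tri_nonneg o a b) (tri_nonneg o c d)))
    _ = 16 * (tri o d a * tri o c d * tri o a b * tri o b c) := by ring

/-- `a b c d` is a convex quadrilateral (counterclockwise), `o` an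
interior point, the vertex `d` is non-admissible, and `o` lies in the forbidden
region. -/
theorem stmt_6 (a b c d o : ℝ × ℝ)
    (hc1 : 0 < det2 (b - a) (c - a)) (hc2 : 0 < det2 (c - b) (d - b))
    (hc3 : 0 < det2 (d - c) (a - c)) (hc4 : 0 < det2 (a - d) (b - d))
    (ho1 : 0 < det2 (b - a) (o - a)) (ho2 : 0 < det2 (c - b) (o - b))
    (ho3 : 0 < det2 (d - c) (o - c)) (ho4 : 0 < det2 (a - d) (o - d))
    (hna1 : tri a b d ≤ tri a b c) (hna2 : tri b c d ≤ tri a b c)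
    (hf1 : 2 * tri o a b ≤ tri a b c) (hf2 : 2 * tri o b c ≤ tri a b c)
    (hf3 : 2 * tri o d a ≤ tri a b d) (hf4 : 2 * tri o c d ≤ tri b c d) :
    tri c d a ^ 2 * tri a b c ^ 2 ≤ 16 * (tri o d a * tri o c d * tri o a b * tri o b c) :=
  stmt_6_general a b c d o hc1 hc2 hc3 hc4 hna1 hna2 hf1 hf2 hf3 hf4
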